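/- arXiv:2006.16398 — 2 statements merged into one kernel-verified Lean document; each statement's English description precedes it below -/
import Mathlib

section
/- (Proposition 1) There are constants C₁, C₂ ≥ 1 such that φ' ∈ WUSC(1, C₁, 2θ₁) and φ ∈ WUSC(2, C₂, 2θ₀), i.e. φ'(λx) ≤ C₁ λ φ'(x) for all λ ≥ 1 and x > 2θ₁, and φ(λx) ≤ C₂ λ² φ(x) for all λ ≥ 1 and x > 2θ₀. Furthermore, if θ₀ = 0 and φ'(0⁺) ≤ 0, then one may take C₁ = C₂ = 1, i.e. φ'(λx) ≤ λ φ'(x) and φ(λx) ≤ λ² φ(x) for all x > 0 and λ ≥ 1. -/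
open MeasureTheory Real Set Filter

noncomputable section

/-- Weak lower scaling property at infinity: `f(l*x) ≥ c * l^τ * f(x)` for `l ≥ 1`, `x > x₁`. -/
def WLSC (f : ℝ → ℝ) (τ c x₁ : ℝ) : Prop :=
  ∀ l : ℝ, 1 ≤ l → ∀ x : ℝ, x₁ < x → c * l ^ τ * f x ≤ f (l * x)

/-- Weak upper scaling property at infinity: `f(l*x) ≤ C * l^τ * f(x)` for `l ≥ 1`, `x > x₁`. -/
def WUSC (f : ℝ → ℝ) (τ C x₁ : ℝ) : Prop :=
  ∀ l : ℝ, 1 ≤ l → ∀ x : ℝ, x₁ < x → f (l * x) ≤ C * l ^ τ * f x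

/-- The Pruitt function `K(r) = σ²/r² + r⁻² ∫_{(0,r)} s² ν(ds)`. -/
def pruittK (σ : ℝ) (ν : Measure ℝ) (r : ℝ) : ℝ :=
  σ ^ 2 / r ^ 2 + (∫ s in Ioo (0:ℝ) r, s ^ 2 ∂ν) / r ^ 2

/-- The Pruitt function `h(r) = σ²/r² + ∫_{(0,∞)} min(1, s²/r²) ν(ds)`. -/
def pruittH (σ : ℝ) (ν : Measure ℝ) (r : ℝ) : ℝ :=
  σ ^ 2 / r ^ 2 + ∫ s in Ioi (0:ℝ), min 1 (s ^ 2 / r ^ 2) ∂ν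

/-- The real part of the characteristic exponent:
`Re ψ(ξ) = σ²ξ² + ∫_{(0,∞)} (1 − cos(ξx)) ν(dx)`. -/
def rePsi (σ : ℝ) (ν : Measure ℝ) (ξ : ℝ) : ℝ :=
  σ ^ 2 * ξ ^ 2 + ∫ x in Ioi (0:ℝ), (1 - Real.cos (ξ * x)) ∂ν

/-- `ψ*(r) = sup_{|z| ≤ r} Re ψ(z)`. -/
def psiStar (σ : ℝ) (ν : Measure ℝ) (r : ℝ) : ℝ :=
  sSup (rePsi σ ν '' {z : ℝ | |z| ≤ r})

/-- `ψ⁻¹(s) = sup{r > 0 : ψ*(r) = s}`. -/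
def psiInv (σ : ℝ) (ν : Measure ℝ) (s : ℝ) : ℝ :=
  sSup {r : ℝ | 0 < r ∧ psiStar σ ν r = s}

/-- `Φ(x) = x² φ''(x)`. -/
def bigPhi (φ'' : ℝ → ℝ) (x : ℝ) : ℝ := x ^ 2 * φ'' x

/-- `Φ*(r) = sup_{0 < s ≤ r} Φ(s)`. -/
def bigPhiStar (φ'' : ℝ → ℝ) (r : ℝ) : ℝ := sSup (bigPhi φ'' '' Ioc (0:ℝ) r)

/-- `Φ⁻¹(s) = sup{r > 0 : Φ*(r) = s}`. -/
def bigPhiInv (φ'' : ℝ → ℝ) (s : ℝ) : ℝ := sSup {r : ℝ | 0 < r ∧ bigPhiStar φ'' r = s}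

/-- The characteristic (Lévy–Khintchine) exponent
`ψ(ξ) = σ²ξ² − ibξ − ∫_{(0,∞)} (e^{iξx} − 1 − iξx 1_{x<1}) ν(dx)`. -/
def charExp (σ b : ℝ) (ν : Measure ℝ) (ξ : ℝ) : ℂ :=
  (σ : ℂ) ^ 2 * (ξ : ℂ) ^ 2 - Complex.I * (b : ℂ) * (ξ : ℂ) -
    ∫ x in Ioi (0:ℝ), (Complex.exp (Complex.I * (ξ : ℂ) * (x : ℂ)) - 1 -
      Complex.I * (ξ : ℂ) * (x : ℂ) * (if x < 1 then (1:ℂ) else 0)) ∂ν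

/-- The holomorphic extension of the Laplace exponent to `{Re z > 0}`. -/
def laplaceC (σ b : ℝ) (ν : Measure ℝ) (z : ℂ) : ℂ :=
  (σ : ℂ) ^ 2 * z ^ 2 - (b : ℂ) * z +
    ∫ x in Ioi (0:ℝ), (Complex.exp (-(z * (x : ℂ))) - 1 +
      z * (x : ℂ) * (if x < 1 then (1:ℂ) else 0)) ∂ν

/-- `b_r = b + ∫_{(0,∞)} s (1_{s<r} − 1_{s<1}) ν(ds)`. -/
def brFn (b : ℝ) (ν : Measure ℝ) (r : ℝ) : ℝ :=
  b + ∫ s in Ioi (0:ℝ), s * ((if s < r then (1:ℝ) else 0) - (if s < 1 then (1:ℝ) else 0)) ∂ν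

/-- The majorant `η`: `η(0) = ∞`, `η(s) = s⁻¹ Φ*(1/s)` for `0 < s < 1/x₀`,
and `η(s) = A s⁻¹ |φ(1/s)|` for `s ≥ 1/x₀`, where `A = Φ*(x₀)/|φ(x₀)|`. -/
def etaFn (φ φ'' : ℝ → ℝ) (x₀ : ℝ) (s : ℝ) : ENNReal :=
  if s ≤ 0 then ⊤
  else if x₀ * s < 1 then ENNReal.ofReal (s⁻¹ * bigPhiStar φ'' s⁻¹)
  else ENNReal.ofReal ((bigPhiStar φ'' x₀ / |φ x₀|) * s⁻¹ * |φ s⁻¹|)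

/-!
On `(0, ∞)` the Laplace exponent is convex with a concave derivative: `φ'' ≥ 0` is nonincreasing,
being `2σ²` plus the Laplace transform of `x² ν(dx)`. Taylor bounds with a nonincreasing `φ''` give
`x φ''(x) ≤ 2 φ'(x)` as soon as `φ'(x/2) ≥ 0`, and `x φ'(x) ≤ 8 φ(x)` as soon as moreover
`φ(3x/4) ≥ 0`; these yield the scaling bounds with `C₁ = 2` and `C₂ = 16`. Unbounded variation makes
`φ'` unbounded, dyadically `φ'(2p) - φ'(p) ≥ p φ''(2p) ≥ (e⁻²/2) ∫_{(1/2p, 1/p]} x ν(dx)`, so `φ`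
and `φ'` are positive beyond `θ₀` (near `0` one uses `φ(λ) = O(λ)`), which makes `2θ₀` and `2θ₁`
admissible thresholds. When `θ₀ = 0` the Taylor bounds can be run down to `0`, giving
`x φ''(x) ≤ φ'(x)` and hence `φ'(λx) ≤ λ φ'(x)`.
-/

open Topology

lemma image_sub_le_mul_sub_of_hasDerivAt {g g' : ℝ → ℝ} {a b C : ℝ}
    (hg : ∀ x, 0 < x → HasDerivAt g (g' x) x) (ha : 0 < a) (hab : a ≤ b)
    (hC : ∀ c ∈ Ioo a b, g' c ≤ C) : g b - g a ≤ C * (b - a) := by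
  rcases hab.eq_or_lt with rfl | hab
  · simp
  obtain ⟨c, hc, hslope⟩ := exists_hasDerivAt_eq_slope g g' hab
    (fun x hx => (hg x (ha.trans_le hx.1)).continuousAt.continuousWithinAt)
    (fun x hx => hg x (ha.trans hx.1))
  rw [← div_le_iff₀ (sub_pos.2 hab), ← hslope]
  exact hC c hc

lemma mul_sub_le_image_sub_of_hasDerivAt {g g' : ℝ → ℝ} {a b C : ℝ}
    (hg : ∀ x, 0 < x → HasDerivAt g (g' x) x) (ha : 0 < a) (hab : a ≤ b)
    (hC : ∀ c ∈ Ioo a b, C ≤ g' c) : C * (b - a) ≤ g b - g a := by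
  have := image_sub_le_mul_sub_of_hasDerivAt (g := -g) (g' := -g') (C := -C)
    (fun x hx => (hg x hx).neg) ha hab (fun c hc => neg_le_neg (hC c hc))
  simp only [Pi.neg_apply] at this
  linarith

lemma nonpos_of_forall_le_mul {a c x : ℝ} (hx : 0 < x) (h : ∀ u ∈ Ioo 0 x, a ≤ c * u) :
    a ≤ 0 := by
  have hlim : Tendsto (fun u => c * u) (𝓝[>] 0) (𝓝 0) := by
    simpa using ((continuous_const_mul c).tendsto 0).mono_left nhdsWithin_le_nhds
  exact ge_of_tendsto hlim (eventually_of_mem (Ioo_mem_nhdsGT hx) h)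

structure ConvexWithConcaveDeriv (f f' f'' : ℝ → ℝ) : Prop where
  hasDerivAt : ∀ x, 0 < x → HasDerivAt f (f' x) x
  hasDerivAt_deriv : ∀ x, 0 < x → HasDerivAt f' (f'' x) x
  secondDeriv_nonneg : ∀ x, 0 < x → 0 ≤ f'' x
  antitoneOn_secondDeriv : AntitoneOn f'' (Ioi 0)

namespace ConvexWithConcaveDeriv

variable {f f' f'' : ℝ → ℝ} {a b x l : ℝ}

lemma sub_deriv_le_secondDeriv_mul_sub (h : ConvexWithConcaveDeriv f f' f'') (ha : 0 < a)
    (hab : a ≤ b) :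
    f' b - f' a ≤ f'' a * (b - a) :=
  image_sub_le_mul_sub_of_hasDerivAt h.hasDerivAt_deriv ha hab fun _ hc =>
    h.antitoneOn_secondDeriv ha (ha.trans hc.1) hc.1.le

lemma secondDeriv_mul_sub_le_sub_deriv (h : ConvexWithConcaveDeriv f f' f'') (ha : 0 < a)
    (hab : a ≤ b) :
    f'' b * (b - a) ≤ f' b - f' a :=
  mul_sub_le_image_sub_of_hasDerivAt h.hasDerivAt_deriv ha hab fun _ hc =>
    h.antitoneOn_secondDeriv (ha.trans hc.1) (ha.trans_le hab) hc.2.le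

lemma deriv_le_deriv (h : ConvexWithConcaveDeriv f f' f'') (ha : 0 < a) (hab : a ≤ b) :
    f' a ≤ f' b := by
  have := h.secondDeriv_mul_sub_le_sub_deriv ha hab
  nlinarith [h.secondDeriv_nonneg b (ha.trans_le hab)]

lemma deriv_mul_sub_le_sub (h : ConvexWithConcaveDeriv f f' f'') (ha : 0 < a) (hab : a ≤ b) :
    f' a * (b - a) ≤ f b - f a :=
  mul_sub_le_image_sub_of_hasDerivAt h.hasDerivAt ha hab fun _ hc => h.deriv_le_deriv ha hc.1.le

lemma sub_le_deriv_mul_sub (h : ConvexWithConcaveDeriv f f' f'') (ha : 0 < a) (hab : a ≤ b) :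
    f b - f a ≤ f' b * (b - a) :=
  image_sub_le_mul_sub_of_hasDerivAt h.hasDerivAt ha hab fun _ hc =>
    h.deriv_le_deriv (ha.trans hc.1) hc.2.le

lemma mul_secondDeriv_le (h : ConvexWithConcaveDeriv f f' f'') (hx : 0 < x)
    (hx' : 0 ≤ f' (x / 2)) : x * f'' x ≤ 2 * f' x := by
  have := h.secondDeriv_mul_sub_le_sub_deriv (half_pos hx) (half_le_self hx.le)
  linarith

lemma deriv_mul_le_two_mul (h : ConvexWithConcaveDeriv f f' f'') (hx : 0 < x)
    (hx' : 0 ≤ f' (x / 2)) (hl : 1 ≤ l) : f' (l * x) ≤ 2 * l * f' x := by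
  have hTaylor := h.sub_deriv_le_secondDeriv_mul_sub hx (le_mul_of_one_le_left hx.le hl)
  have hsecond := h.mul_secondDeriv_le hx hx'
  have hpos : 0 ≤ f' x := hx'.trans (h.deriv_le_deriv (half_pos hx) (half_le_self hx.le))
  nlinarith

lemma mul_deriv_le (h : ConvexWithConcaveDeriv f f' f'') (hx : 0 < x)
    (hx' : 0 ≤ f' (x / 2)) (hx'' : 0 ≤ f (3 * x / 4)) : x * f' x ≤ 8 * f x := by
  have h₁ := h.sub_deriv_le_secondDeriv_mul_sub (a := 3 * x / 4) (b := x) (by positivity)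
    (by linarith)
  have h₂ := h.secondDeriv_mul_sub_le_sub_deriv (a := x / 2) (b := 3 * x / 4) (by positivity)
    (by linarith)
  have h₃ := h.deriv_mul_sub_le_sub (a := 3 * x / 4) (b := x) (by positivity) (by linarith)
  nlinarith

lemma apply_mul_le_sixteen_mul (h : ConvexWithConcaveDeriv f f' f'') (hx : 0 < x)
    (hx' : 0 ≤ f' (x / 2)) (hx'' : 0 ≤ f (3 * x / 4)) (hl : 1 ≤ l) :
    f (l * x) ≤ 16 * l ^ 2 * f x := by
  have h₁ := h.sub_le_deriv_mul_sub hx (le_mul_of_one_le_left hx.le hl)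
  have h₂ := h.deriv_mul_le_two_mul hx hx' hl
  have h₃ := h.mul_deriv_le hx hx' hx''
  have hfx : 0 ≤ f x := by nlinarith [h.deriv_le_deriv (half_pos hx) (half_le_self hx.le)]
  have hlx : 0 ≤ l * x - x := by nlinarith
  have h₄ := mul_le_mul_of_nonneg_right h₂ hlx
  have h₅ := mul_le_mul_of_nonneg_left h₃ (by nlinarith : 0 ≤ 2 * l * (l - 1))
  nlinarith

lemma deriv_mul_le_mul (h : ConvexWithConcaveDeriv f f' f'') (hf' : ∀ u, 0 < u → 0 ≤ f' u)
    (hx : 0 < x) (hl : 1 ≤ l) : f' (l * x) ≤ l * f' x := by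
  have hsecond : x * f'' x - f' x ≤ 0 := nonpos_of_forall_le_mul (c := f'' x) hx fun u hu => by
    have := h.secondDeriv_mul_sub_le_sub_deriv hu.1 hu.2.le
    linarith [hf' u hu.1]
  have hTaylor := h.sub_deriv_le_secondDeriv_mul_sub hx (le_mul_of_one_le_left hx.le hl)
  nlinarith

lemma apply_mul_le_sq_mul (h : ConvexWithConcaveDeriv f f' f'') (hf : ∀ u, 0 < u → 0 ≤ f u)
    (hf' : ∀ u, 0 < u → 0 ≤ f' u) (hx : 0 < x) (hl : 1 ≤ l) : f (l * x) ≤ l ^ 2 * f x := by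
  have hl0 : 0 < l := one_pos.trans_le hl
  -- `s ↦ f (l * s) - l ^ 2 * f s` is antitone by `deriv_mul_le_mul`, and `O(s)` as `s → 0`.
  have hk : ∀ s, 0 < s → HasDerivAt (fun s => f (l * s) - l ^ 2 * f s)
      (f' (l * s) * l - l ^ 2 * f' s) s := fun s hs =>
    ((h.hasDerivAt (l * s) (by positivity)).comp s ((hasDerivAt_id s).const_mul l)).sub
      ((h.hasDerivAt s hs).const_mul (l ^ 2)) |>.congr_deriv (by simp)
  refine sub_nonpos.1 (nonpos_of_forall_le_mul (c := f' (l * x) * (l - 1)) hx fun u hu => ?_)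
  have hanti := image_sub_le_mul_sub_of_hasDerivAt (C := 0) hk hu.1 hu.2.le fun c hc => by
    have := h.deriv_mul_le_mul hf' (hu.1.trans hc.1) hl
    nlinarith
  have hlu : u ≤ l * u := le_mul_of_one_le_left hu.1.le hl
  have hsub := h.sub_le_deriv_mul_sub hu.1 hlu
  have hmono := h.deriv_le_deriv (mul_pos hl0 hu.1) (mul_le_mul_of_nonneg_left hu.2.le hl0.le)
  have h₁ := mul_le_mul_of_nonneg_right hmono (sub_nonneg.2 hlu)
  have h₂ := mul_le_mul_of_nonneg_right (one_le_pow₀ hl (n := 2)) (hf u hu.1)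
  nlinarith

lemma exists_pos_of_forall_exists_lt_deriv (h : ConvexWithConcaveDeriv f f' f'')
    (hunb : ∀ M, ∃ T, 0 < T ∧ M < f' T) (s : ℝ) : ∃ Y, s < Y ∧ 0 < f Y := by
  obtain ⟨T, hT, hT'⟩ := hunb 1
  set a := max s T
  have ha : 0 < a := hT.trans_le (le_max_right _ _)
  have hY := h.deriv_mul_sub_le_sub ha (le_add_of_nonneg_right (by positivity : 0 ≤ |f a| + 1))
  have hf'a := h.deriv_le_deriv hT (le_max_right s T : T ≤ a)
  refine ⟨a + (|f a| + 1), by linarith [le_max_left s T, abs_nonneg (f a)], ?_⟩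
  have := mul_le_mul_of_nonneg_right (hT'.trans_le hf'a).le (by positivity : 0 ≤ |f a| + 1)
  linarith [neg_abs_le (f a)]

lemma pos_of_isGreatest_zeros (h : ConvexWithConcaveDeriv f f' f'') {θ : ℝ}
    (hθ : IsGreatest {s | 0 ≤ s ∧ f s = 0} θ) (hunb : ∀ M, ∃ T, 0 < T ∧ M < f' T)
    (s : ℝ) (hs : θ < s) : 0 < f s := by
  by_contra! hfs
  have hs0 : 0 < s := hθ.1.1.trans_lt hs
  obtain ⟨Y, hsY, hY⟩ := h.exists_pos_of_forall_exists_lt_deriv hunb s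
  have hcont : ContinuousOn f (Icc s Y) := fun y hy =>
    (h.hasDerivAt y (hs0.trans_le hy.1)).continuousAt.continuousWithinAt
  obtain ⟨c, hc, hfc⟩ := intermediate_value_Icc hsY.le hcont ⟨hfs, hY.le⟩
  have := hθ.2 ⟨hs0.le.trans hc.1, hfc⟩
  linarith [hc.1]

lemma deriv_pos_of_isGreatest_zeros (h : ConvexWithConcaveDeriv f f' f'') {θ C : ℝ}
    (hθ : IsGreatest {s | 0 ≤ s ∧ f s = 0} θ) (hpos : ∀ s, θ < s → 0 < f s)
    (hsmall : ∀ u ∈ Ioc 0 1, f u ≤ C * u) (s : ℝ) (hs : θ < s) : 0 < f' s := by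
  by_contra! hf's
  have hs0 : 0 < s := hθ.1.1.trans_lt hs
  have hanti : ∀ u, 0 < u → u ≤ s → f s ≤ f u := fun u hu hus => by
    nlinarith [h.sub_le_deriv_mul_sub hu hus]
  rcases hθ.1.1.eq_or_lt with rfl | hθ0
  · have := nonpos_of_forall_le_mul (lt_min hs0 one_pos) fun u hu =>
      (hanti u hu.1 (hu.2.le.trans (min_le_left _ _))).trans
        (hsmall u ⟨hu.1, hu.2.le.trans (min_le_right _ _)⟩)
    linarith [hpos s hs]
  · linarith [hanti θ hθ0 hs.le, hθ.1.2, hpos s hs]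

lemma deriv_pos_of_sInf_lt (h : ConvexWithConcaveDeriv f f' f'') {s z : ℝ}
    (hs : 0 < s ∧ 0 < f' s) (hz : sInf {s | 0 < s ∧ 0 < f' s} < z) : 0 < f' z := by
  obtain ⟨t, ht, htz⟩ := (csInf_lt_iff ⟨0, fun t ht => ht.1.le⟩ ⟨s, hs⟩).1 hz
  exact ht.2.trans_le (h.deriv_le_deriv ht.1 htz.le)

end ConvexWithConcaveDeriv

section LevyMeasure

variable {ν : Measure ℝ}

lemma integrableOn_min_one_sq
    (hint : ∫⁻ x in Ioi (0:ℝ), ENNReal.ofReal (min 1 (x ^ 2)) ∂ν ≠ ⊤) :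
    IntegrableOn (fun x : ℝ => min 1 (x ^ 2)) (Ioi 0) ν := by
  refine ⟨by fun_prop, (hasFiniteIntegral_iff_ofReal ?_).2 hint.lt_top⟩
  exact Eventually.of_forall fun x => le_min zero_le_one (sq_nonneg x)

lemma sq_mul_exp_neg_le {l x : ℝ} (hl : 0 < l) (hx : 0 ≤ x) :
    x ^ 2 * exp (-(l * x)) ≤ max 1 (2 / l ^ 2) * min 1 (x ^ 2) := by
  have hsmall : x ^ 2 * exp (-(l * x)) ≤ x ^ 2 :=
    mul_le_of_le_one_right (sq_nonneg x) (exp_le_one_iff.2 (by nlinarith))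
  have hlarge : x ^ 2 * exp (-(l * x)) ≤ 2 / l ^ 2 := by
    rw [exp_neg, ← div_eq_mul_inv, div_le_div_iff₀ (exp_pos _) (by positivity)]
    nlinarith [quadratic_le_exp_of_nonneg (mul_nonneg hl.le hx)]
  rcases le_total 1 (x ^ 2) with h | h
  · rw [min_eq_left h, mul_one]
    exact hlarge.trans (le_max_right _ _)
  · rw [min_eq_right h]
    exact hsmall.trans (le_mul_of_one_le_left (sq_nonneg x) (le_max_left _ _))

lemma integrableOn_sq_mul_exp_neg
    (hint : ∫⁻ x in Ioi (0:ℝ), ENNReal.ofReal (min 1 (x ^ 2)) ∂ν ≠ ⊤) {l : ℝ} (hl : 0 < l) :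
    IntegrableOn (fun x => x ^ 2 * exp (-(l * x))) (Ioi 0) ν := by
  refine ((integrableOn_min_one_sq hint).const_mul (max 1 (2 / l ^ 2))).mono' (by fun_prop) ?_
  refine (ae_restrict_iff' measurableSet_Ioi).2 (Eventually.of_forall fun x (hx : 0 < x) => ?_)
  rw [Real.norm_of_nonneg (by positivity)]
  exact sq_mul_exp_neg_le hl hx.le

lemma two_mul_sq_le_of_eq_integral {σ : ℝ} {φ'' : ℝ → ℝ}
    (hφ'' : ∀ l : ℝ, 0 < l →
      φ'' l = 2 * σ ^ 2 + ∫ x in Ioi (0:ℝ), x ^ 2 * exp (-(l * x)) ∂ν) {l : ℝ} (hl : 0 < l) :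
    2 * σ ^ 2 ≤ φ'' l := by
  rw [hφ'' l hl]
  exact le_add_of_nonneg_right (setIntegral_nonneg measurableSet_Ioi fun x _ => by positivity)

lemma convexWithConcaveDeriv_of_integral {σ : ℝ} {φ φ' φ'' : ℝ → ℝ}
    (hint : ∫⁻ x in Ioi (0:ℝ), ENNReal.ofReal (min 1 (x ^ 2)) ∂ν ≠ ⊤)
    (hD1 : ∀ x : ℝ, 0 < x → HasDerivAt φ (φ' x) x)
    (hD2 : ∀ x : ℝ, 0 < x → HasDerivAt φ' (φ'' x) x)
    (hφ'' : ∀ l : ℝ, 0 < l →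
      φ'' l = 2 * σ ^ 2 + ∫ x in Ioi (0:ℝ), x ^ 2 * exp (-(l * x)) ∂ν) :
    ConvexWithConcaveDeriv φ φ' φ'' where
  hasDerivAt := hD1
  hasDerivAt_deriv := hD2
  secondDeriv_nonneg _ hl := (by positivity : 0 ≤ 2 * σ ^ 2).trans
    (two_mul_sq_le_of_eq_integral hφ'' hl)
  antitoneOn_secondDeriv a ha b hb hab := by
    rw [hφ'' a ha, hφ'' b hb]
    gcongr 2 * σ ^ 2 + ?_
    refine setIntegral_mono_on (integrableOn_sq_mul_exp_neg hint hb)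
      (integrableOn_sq_mul_exp_neg hint ha) measurableSet_Ioi fun x (hx : 0 < x) => ?_
    gcongr

lemma exp_neg_sub_one_add_le {l x : ℝ} (hl : 0 < l) (hl1 : l ≤ 1) (hx : 0 < x) :
    exp (-(l * x)) - 1 + l * x * (if x < 1 then 1 else 0) ≤ l * min 1 (x ^ 2) := by
  split_ifs with hx1
  · have hlx : |-(l * x)| ≤ 1 := by
      rw [abs_neg, abs_of_pos (by positivity)]; nlinarith
    have hTaylor := (le_abs_self _).trans (abs_exp_sub_one_sub_id_le hlx)
    rw [min_eq_right (by nlinarith)]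
    nlinarith
  · have : exp (-(l * x)) ≤ 1 := exp_le_one_iff.2 (by nlinarith)
    have : 0 ≤ l * min 1 (x ^ 2) := by positivity
    linarith

lemma le_mul_on_Ioc_of_levyKhintchine {σ b : ℝ} {φ : ℝ → ℝ}
    (hint : ∫⁻ x in Ioi (0:ℝ), ENNReal.ofReal (min 1 (x ^ 2)) ∂ν ≠ ⊤)
    (hφ : ∀ l : ℝ, 0 ≤ l → φ l = σ ^ 2 * l ^ 2 - b * l +
      ∫ x in Ioi (0:ℝ), (exp (-(l * x)) - 1 + l * x * (if x < 1 then 1 else 0)) ∂ν) :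
    ∀ l ∈ Ioc (0:ℝ) 1, φ l ≤ (σ ^ 2 + |b| + ∫ x in Ioi (0:ℝ), min 1 (x ^ 2) ∂ν) * l := by
  rintro l ⟨hl, hl1⟩
  have hK : 0 ≤ ∫ x in Ioi (0:ℝ), min 1 (x ^ 2) ∂ν :=
    setIntegral_nonneg measurableSet_Ioi fun x _ => le_min zero_le_one (sq_nonneg x)
  -- A non-integrable integrand has integral `0`, which satisfies the same bound.
  have hint_le : ∫ x in Ioi (0:ℝ), (exp (-(l * x)) - 1 + l * x * (if x < 1 then 1 else 0)) ∂ν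
      ≤ l * ∫ x in Ioi (0:ℝ), min 1 (x ^ 2) ∂ν := by
    by_cases hi : IntegrableOn
        (fun x => exp (-(l * x)) - 1 + l * x * (if x < 1 then 1 else 0)) (Ioi 0) ν
    · rw [← integral_const_mul]
      exact setIntegral_mono_on hi ((integrableOn_min_one_sq hint).const_mul l)
        measurableSet_Ioi fun x hx => exp_neg_sub_one_add_le hl hl1 hx
    · rw [integral_undef hi]
      positivity
  have hσ : σ ^ 2 * l ^ 2 ≤ σ ^ 2 * l := by
    gcongr; nlinarith
  have hb : -(b * l) ≤ |b| * l := by nlinarith [neg_abs_le b]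
  rw [hφ l hl.le]
  linarith

lemma ofReal_mul_lintegral_Ioc_le
    (hint : ∫⁻ x in Ioi (0:ℝ), ENNReal.ofReal (min 1 (x ^ 2)) ∂ν ≠ ⊤) {p : ℝ} (hp : 0 < p) :
    ENNReal.ofReal (exp (-2) / 2) * ∫⁻ x in Ioc (2 * p)⁻¹ p⁻¹, ENNReal.ofReal x ∂ν ≤
      ENNReal.ofReal (p * ∫ x in Ioi (0:ℝ), x ^ 2 * exp (-(2 * p * x)) ∂ν) := by
  rw [← lintegral_const_mul' _ _ ENNReal.ofReal_ne_top, ← integral_const_mul,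
    ofReal_integral_eq_lintegral_ofReal
      ((integrableOn_sq_mul_exp_neg hint (by positivity)).const_mul p)
      (Eventually.of_forall fun x => by positivity)]
  calc ∫⁻ x in Ioc (2 * p)⁻¹ p⁻¹, ENNReal.ofReal (exp (-2) / 2) * ENNReal.ofReal x ∂ν
      ≤ ∫⁻ x in Ioc (2 * p)⁻¹ p⁻¹, ENNReal.ofReal (p * (x ^ 2 * exp (-(2 * p * x)))) ∂ν := by
        refine setLIntegral_mono' measurableSet_Ioc fun x ⟨hx₁, hx₂⟩ => ?_
        have hx : 0 < x := (by positivity : (0:ℝ) < (2 * p)⁻¹).trans hx₁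
        rw [← ENNReal.ofReal_mul (by positivity)]
        refine ENNReal.ofReal_le_ofReal ?_
        rw [inv_lt_iff_one_lt_mul₀ (by positivity)] at hx₁
        replace hx₂ : p * x ≤ 1 := by
          simpa [hp.ne'] using mul_le_mul_of_nonneg_left hx₂ hp.le
        have hexp : exp (-2) ≤ exp (-(2 * p * x)) := exp_le_exp.2 (by nlinarith)
        have hsq : x / 2 ≤ p * x ^ 2 := by nlinarith
        nlinarith [mul_le_mul hexp hsq (by positivity) (exp_pos _).le]
    _ ≤ ∫⁻ x in Ioi 0, ENNReal.ofReal (p * (x ^ 2 * exp (-(2 * p * x)))) ∂ν :=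
        lintegral_mono_set fun x hx => (by positivity : (0:ℝ) < (2 * p)⁻¹).trans hx.1

lemma ofReal_mul_lintegral_Ioc_le_sub_deriv {σ : ℝ} {φ φ' φ'' : ℝ → ℝ}
    (h : ConvexWithConcaveDeriv φ φ' φ'')
    (hint : ∫⁻ x in Ioi (0:ℝ), ENNReal.ofReal (min 1 (x ^ 2)) ∂ν ≠ ⊤)
    (hφ'' : ∀ l : ℝ, 0 < l →
      φ'' l = 2 * σ ^ 2 + ∫ x in Ioi (0:ℝ), x ^ 2 * exp (-(l * x)) ∂ν) (N : ℕ) :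
    ENNReal.ofReal (exp (-2) / 2) * ∫⁻ x in Ioc ((2:ℝ) ^ N)⁻¹ 1, ENNReal.ofReal x ∂ν ≤
      ENNReal.ofReal (φ' (2 ^ N) - φ' 1) := by
  induction N with
  | zero => simp
  | succ N ih =>
    set p : ℝ := 2 ^ N
    have hp : 1 ≤ p := one_le_pow₀ one_le_two
    have hp0 : 0 < p := one_pos.trans_le hp
    have hstep : p * ∫ x in Ioi (0:ℝ), x ^ 2 * exp (-(2 * p * x)) ∂ν ≤ φ' (2 * p) - φ' p := by
      have := h.secondDeriv_mul_sub_le_sub_deriv hp0 (by linarith : p ≤ 2 * p)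
      rw [hφ'' (2 * p) (by positivity)] at this
      nlinarith [sq_nonneg σ]
    have hsplit : Ioc ((2:ℝ) ^ (N + 1))⁻¹ 1 = Ioc (2 * p)⁻¹ p⁻¹ ∪ Ioc p⁻¹ 1 := by
      rw [pow_succ', Ioc_union_Ioc_eq_Ioc (inv_anti₀ hp0 (by linarith)) (inv_le_one_of_one_le₀ hp)]
    rw [hsplit, lintegral_union measurableSet_Ioc (Ioc_disjoint_Ioc_of_le le_rfl), mul_add,
      pow_succ', ← sub_add_sub_cancel _ (φ' p),
      ENNReal.ofReal_add (sub_nonneg.2 (h.deriv_le_deriv hp0 (by linarith)))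
        (sub_nonneg.2 (h.deriv_le_deriv one_pos hp))]
    exact add_le_add ((ofReal_mul_lintegral_Ioc_le hint hp0).trans
      (ENNReal.ofReal_le_ofReal hstep)) ih

lemma tendsto_setLIntegral_Ioc_inv_two_pow {g : ℝ → ENNReal}
    (hg : ∫⁻ x in Ioo (0:ℝ) 1, g x ∂ν = ⊤) :
    Tendsto (fun N : ℕ => ∫⁻ x in Ioc ((2:ℝ) ^ N)⁻¹ 1, g x ∂ν) atTop (𝓝 ⊤) := by
  have hmono : Monotone fun N : ℕ => Ioc ((2:ℝ) ^ N)⁻¹ 1 := fun m n hmn =>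
    Ioc_subset_Ioc_left (inv_anti₀ (by positivity) (pow_le_pow_right₀ one_le_two hmn))
  have hunion : ⋃ N : ℕ, Ioc ((2:ℝ) ^ N)⁻¹ 1 = Ioc 0 1 := by
    ext x
    simp only [mem_iUnion, mem_Ioc]
    constructor
    · rintro ⟨N, hN, hx⟩
      exact ⟨(by positivity : (0:ℝ) < (2 ^ N)⁻¹).trans hN, hx⟩
    · rintro ⟨hx, hx1⟩
      obtain ⟨N, hN⟩ := exists_pow_lt_of_lt_one hx (by norm_num : (2:ℝ)⁻¹ < 1)
      exact ⟨N, by rwa [← inv_pow], hx1⟩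
  have hlim := tendsto_measure_iUnion_atTop (μ := ν.withDensity g) hmono
  have htop : ∫⁻ x in Ioc (0:ℝ) 1, g x ∂ν = ⊤ :=
    top_unique (hg ▸ lintegral_mono_set Ioo_subset_Ioc_self)
  rw [hunion, withDensity_apply _ measurableSet_Ioc, htop] at hlim
  simpa [Function.comp_def, withDensity_apply _ measurableSet_Ioc] using hlim

lemma exists_lt_deriv {σ : ℝ} {φ φ' φ'' : ℝ → ℝ} (h : ConvexWithConcaveDeriv φ φ' φ'')
    (hint : ∫⁻ x in Ioi (0:ℝ), ENNReal.ofReal (min 1 (x ^ 2)) ∂ν ≠ ⊤)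
    (hφ'' : ∀ l : ℝ, 0 < l →
      φ'' l = 2 * σ ^ 2 + ∫ x in Ioi (0:ℝ), x ^ 2 * exp (-(l * x)) ∂ν)
    (hUV : 0 < σ ∨ ∫⁻ x in Ioo (0:ℝ) 1, ENNReal.ofReal x ∂ν = ⊤) (M : ℝ) :
    ∃ T, 0 < T ∧ M < φ' T := by
  rcases hUV with hσ | hν
  · set T := 1 + (|M - φ' 1| + 1) / (2 * σ ^ 2)
    have hT : 1 ≤ T := le_add_of_nonneg_right (by positivity)
    have hgrowth := mul_sub_le_image_sub_of_hasDerivAt (C := 2 * σ ^ 2) h.hasDerivAt_deriv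
      one_pos hT fun c hc => two_mul_sq_le_of_eq_integral hφ'' (one_pos.trans hc.1)
    have hTσ : 2 * σ ^ 2 * (T - 1) = |M - φ' 1| + 1 := by
      simp only [T]; field_simp; ring
    exact ⟨T, by linarith, by linarith [le_abs_self (M - φ' 1)]⟩
  · have hlim : Tendsto (fun N : ℕ => ENNReal.ofReal (exp (-2) / 2) *
        ∫⁻ x in Ioc ((2:ℝ) ^ N)⁻¹ 1, ENNReal.ofReal x ∂ν) atTop (𝓝 ⊤) := by
      have := ENNReal.Tendsto.const_mul (tendsto_setLIntegral_Ioc_inv_two_pow hν)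
        (Or.inr (ENNReal.ofReal_ne_top (r := exp (-2) / 2)))
      rwa [ENNReal.mul_top (ENNReal.ofReal_pos.2 (by positivity)).ne'] at this
    obtain ⟨N, hN⟩ := ((tendsto_order.1 hlim).1 _ (ENNReal.ofReal_lt_top (r := M - φ' 1))).exists
    have := ENNReal.ofReal_lt_ofReal_iff'.1
      (hN.trans_le (ofReal_mul_lintegral_Ioc_le_sub_deriv h hint hφ'' N))
    exact ⟨2 ^ N, by positivity, by linarith [this.1]⟩

end LevyMeasure

theorem statement0_general
    (ν : Measure ℝ)
    (hint : ∫⁻ x in Ioi (0:ℝ), ENNReal.ofReal (min 1 (x ^ 2)) ∂ν ≠ ⊤)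
    (σ b : ℝ)
    (φ φ' φ'' : ℝ → ℝ)
    (hφ : ∀ l : ℝ, 0 ≤ l → φ l = σ ^ 2 * l ^ 2 - b * l +
      ∫ x in Ioi (0:ℝ), (Real.exp (-(l * x)) - 1 + l * x * (if x < 1 then 1 else 0)) ∂ν)
    (hD1 : ∀ x : ℝ, 0 < x → HasDerivAt φ (φ' x) x)
    (hD2 : ∀ x : ℝ, 0 < x → HasDerivAt φ' (φ'' x) x)
    (hφ'' : ∀ l : ℝ, 0 < l → φ'' l = 2 * σ ^ 2 + ∫ x in Ioi (0:ℝ), x ^ 2 * Real.exp (-(l * x)) ∂ν)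
    (hUV : 0 < σ ∨ ∫⁻ x in Ioo (0:ℝ) 1, ENNReal.ofReal x ∂ν = ⊤)
    (θ₀ θ₁ : ℝ)
    (hθ₀ : IsGreatest {s : ℝ | 0 ≤ s ∧ φ s = 0} θ₀)
    (hθ₁ : θ₁ = sInf {s : ℝ | 0 < s ∧ 0 < φ' s})
    :
    (∃ C₁ : ℝ, 1 ≤ C₁ ∧ WUSC φ' 1 C₁ (2 * θ₁)) ∧
    (∃ C₂ : ℝ, 1 ≤ C₂ ∧ WUSC φ 2 C₂ (2 * θ₀)) ∧
    ((θ₀ = 0 ∧ (∀ ε : ℝ, 0 < ε → ∃ x : ℝ, 0 < x ∧ φ' x < ε)) →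
      ∀ x : ℝ, 0 < x → ∀ l : ℝ, 1 ≤ l →
        φ' (l * x) ≤ l * φ' x ∧ φ (l * x) ≤ l ^ 2 * φ x) := by
  have h := convexWithConcaveDeriv_of_integral hint hD1 hD2 hφ''
  have hpos := h.pos_of_isGreatest_zeros hθ₀ (exists_lt_deriv h hint hφ'' hUV)
  have hderiv_pos :=
    h.deriv_pos_of_isGreatest_zeros hθ₀ hpos (le_mul_on_Ioc_of_levyKhintchine hint hφ)
  have hθ₀_nonneg : 0 ≤ θ₀ := hθ₀.1.1
  have hθ₁_nonneg : 0 ≤ θ₁ := hθ₁ ▸ Real.sInf_nonneg fun s hs => hs.1.le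
  have hderiv_pos_of_θ₁_lt : ∀ z, θ₁ < z → 0 < φ' z := fun z hz =>
    h.deriv_pos_of_sInf_lt ⟨by linarith, hderiv_pos (θ₀ + 1) (by linarith)⟩ (hθ₁ ▸ hz)
  refine ⟨⟨2, one_le_two, fun l hl x hx => ?_⟩, ⟨16, by norm_num, fun l hl x hx => ?_⟩, ?_⟩
  · rw [rpow_one]
    exact h.deriv_mul_le_two_mul (by linarith) (hderiv_pos_of_θ₁_lt _ (by linarith)).le hl
  · rw [rpow_two]
    exact h.apply_mul_le_sixteen_mul (by linarith) (hderiv_pos _ (by linarith)).le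
      (hpos _ (by linarith)).le hl
  · rintro ⟨rfl, -⟩ x hx l hl
    have hφ' : ∀ u, 0 < u → 0 ≤ φ' u := fun u hu => (hderiv_pos u hu).le
    exact ⟨h.deriv_mul_le_mul hφ' hx hl,
      h.apply_mul_le_sq_mul (fun u hu => (hpos u hu).le) hφ' hx hl⟩

/-- Proposition 1. -/
theorem statement0
    (ν : Measure ℝ) [SigmaFinite ν]
    (hint : ∫⁻ x in Ioi (0:ℝ), ENNReal.ofReal (min 1 (x ^ 2)) ∂ν ≠ ⊤)
    (σ b : ℝ) (hσ : 0 ≤ σ)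
    (φ φ' φ'' : ℝ → ℝ)
    (hφ : ∀ l : ℝ, 0 ≤ l → φ l = σ ^ 2 * l ^ 2 - b * l +
      ∫ x in Ioi (0:ℝ), (Real.exp (-(l * x)) - 1 + l * x * (if x < 1 then 1 else 0)) ∂ν)
    (hD1 : ∀ x : ℝ, 0 < x → HasDerivAt φ (φ' x) x)
    (hD2 : ∀ x : ℝ, 0 < x → HasDerivAt φ' (φ'' x) x)
    (hφ'' : ∀ l : ℝ, 0 < l → φ'' l = 2 * σ ^ 2 + ∫ x in Ioi (0:ℝ), x ^ 2 * Real.exp (-(l * x)) ∂ν)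
    (hUV : 0 < σ ∨ ∫⁻ x in Ioo (0:ℝ) 1, ENNReal.ofReal x ∂ν = ⊤)
    (θ₀ θ₁ : ℝ)
    (hθ₀ : IsGreatest {s : ℝ | 0 ≤ s ∧ φ s = 0} θ₀)
    (hθ₁ : θ₁ = sInf {s : ℝ | 0 < s ∧ 0 < φ' s})
    :
    (∃ C₁ : ℝ, 1 ≤ C₁ ∧ WUSC φ' 1 C₁ (2 * θ₁)) ∧
    (∃ C₂ : ℝ, 1 ≤ C₂ ∧ WUSC φ 2 C₂ (2 * θ₀)) ∧
    ((θ₀ = 0 ∧ (∀ ε : ℝ, 0 < ε → ∃ x : ℝ, 0 < x ∧ φ' x < ε)) →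
      ∀ x : ℝ, 0 < x → ∀ l : ℝ, 1 ≤ l →
        φ' (l * x) ≤ l * φ' x ∧ φ (l * x) ≤ l ^ 2 * φ x) :=
  statement0_general ν hint σ b φ φ' φ'' hφ hD1 hD2 hφ'' hUV θ₀ θ₁ hθ₀ hθ₁
end
end

section
/- (Lemma 2) Suppose φ'' ∈ WLSC(α−2, c, x₀) for some c ∈ (0,1], x₀ ≥ 0 and α > 0. Then there exists a constant C > 0 such that for all x > x₀, C φ''(x) ≤ σ² + ∫_{(0,1/x)} s² ν(ds). -/
open MeasureTheory Real Set Filter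

noncomputable section

/-!
Split `φ''(λx) - 2σ² = ∫ s² e^{-λxs} ν(ds)` at `s = 1/x`: below, `e^{-λxs} ≤ 1`; above,
`e^{-λxs} ≤ e^{1-λ} e^{-xs}`. Hence `φ''(λx) ≤ 2σ² + ∫_{(0,1/x)} s² ν(ds) + e^{1-λ} φ''(x)`.
Lower scaling gives `φ''(λx) ≥ c λ^{α-2} φ''(x)`, and for `λ` large the exponential `e^{1-λ}` is
at most half of `c λ^{α-2}`, so the last term can be absorbed into the left-hand side.
-/

lemma le_max_one_mul_min_one {a b K : ℝ} (hab : a ≤ b) (haK : a ≤ K) (hb : 0 ≤ b) :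
    a ≤ max 1 K * min 1 b := by
  rcases le_total b 1 with h | h
  · rw [min_eq_right h]
    nlinarith [le_max_left 1 K]
  · rw [min_eq_left h, mul_one]
    exact haK.trans (le_max_right 1 K)

lemma sq_mul_exp_neg_mul_le {x s : ℝ} (hx : 0 < x) (hs : 0 ≤ s) :
    s ^ 2 * exp (-(x * s)) ≤ 2 / x ^ 2 := by
  have h := pow_div_factorial_le_exp (x * s) (by positivity) 2
  rw [exp_neg, ← div_eq_mul_inv, div_le_div_iff₀ (exp_pos _) (by positivity)]
  norm_num [Nat.factorial] at h
  nlinarith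

lemma exp_neg_mul_le_exp_one_sub_mul {l t : ℝ} (hl : 1 ≤ l) (ht : 1 ≤ t) :
    exp (-(l * t)) ≤ exp (1 - l) * exp (-t) := by
  rw [← exp_add]
  exact exp_le_exp.mpr (by nlinarith)

lemma exists_exp_one_sub_le_mul_rpow {ε : ℝ} (hε : 0 < ε) (τ : ℝ) :
    ∃ l : ℝ, 1 ≤ l ∧ exp (1 - l) ≤ ε * l ^ τ := by
  have hlim := tendsto_rpow_mul_exp_neg_mul_atTop_nhds_zero (-τ) 1 one_pos
  obtain ⟨l, hsmall, hl⟩ :=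
    ((hlim.eventually (gt_mem_nhds (div_pos hε (exp_pos 1)))).and (eventually_ge_atTop 1)).exists
  refine ⟨l, hl, ?_⟩
  have hl0 : 0 < l := one_pos.trans_le hl
  calc exp (1 - l) = exp 1 * (l ^ (-τ) * exp (-1 * l)) * l ^ τ := by
        rw [rpow_neg hl0.le, sub_eq_add_neg, exp_add, neg_one_mul]
        field_simp
    _ ≤ exp 1 * (ε / exp 1) * l ^ τ := by gcongr
    _ = ε * l ^ τ := by field_simp

section LevyMeasure

variable {ν : Measure ℝ} (hν : IntegrableOn (fun s => min 1 (s ^ 2)) (Ioi 0) ν)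
include hν

lemma integrableOn_sq_Ioo {r : ℝ} (hr : 0 < r) : IntegrableOn (fun s : ℝ => s ^ 2) (Ioo 0 r) ν := by
  refine Integrable.mono' ((hν.mono_set Ioo_subset_Ioi_self).const_mul (max 1 (r ^ 2)))
    (continuous_pow 2).aestronglyMeasurable ?_
  rw [ae_restrict_iff' measurableSet_Ioo]
  filter_upwards with s hs
  rw [norm_of_nonneg (sq_nonneg s)]
  exact le_max_one_mul_min_one le_rfl (by nlinarith [hs.1, hs.2]) (sq_nonneg s)

lemma integrableOn_sq_mul_exp_neg_mul {x : ℝ} (hx : 0 < x) :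
    IntegrableOn (fun s => s ^ 2 * exp (-(x * s))) (Ioi 0) ν := by
  refine Integrable.mono' (hν.const_mul (max 1 (2 / x ^ 2)))
    (by fun_prop : Continuous fun s => s ^ 2 * exp (-(x * s))).aestronglyMeasurable ?_
  rw [ae_restrict_iff' measurableSet_Ioi]
  filter_upwards with s hs
  rw [norm_of_nonneg (by positivity)]
  refine le_max_one_mul_min_one ?_ (sq_mul_exp_neg_mul_le hx (le_of_lt hs)) (sq_nonneg s)
  exact mul_le_of_le_one_right (sq_nonneg s) (exp_le_one_iff.mpr (neg_nonpos.mpr (mul_pos hx hs).le))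

lemma integral_sq_mul_exp_neg_mul_mul_le {x l : ℝ} (hx : 0 < x) (hl : 1 ≤ l) :
    ∫ s in Ioi 0, s ^ 2 * exp (-(l * x * s)) ∂ν ≤
      (∫ s in Ioo 0 x⁻¹, s ^ 2 ∂ν) + exp (1 - l) * ∫ s in Ioi 0, s ^ 2 * exp (-(x * s)) ∂ν := by
  have hlx : 0 < l * x := by positivity
  have hsmall : IntegrableOn ((Ioo 0 x⁻¹).indicator fun s => s ^ 2) (Ioi 0) ν :=
    (integrableOn_sq_Ioo hν (inv_pos.mpr hx)).integrable_indicator measurableSet_Ioo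
      |>.mono_measure Measure.restrict_le_self
  have hlarge := (integrableOn_sq_mul_exp_neg_mul hν hx).const_mul (exp (1 - l))
  calc ∫ s in Ioi 0, s ^ 2 * exp (-(l * x * s)) ∂ν
      ≤ ∫ s in Ioi 0, ((Ioo 0 x⁻¹).indicator (fun s => s ^ 2) s +
          exp (1 - l) * (s ^ 2 * exp (-(x * s)))) ∂ν := by
        refine setIntegral_mono_on (integrableOn_sq_mul_exp_neg_mul hν hlx) (hsmall.add hlarge)
          measurableSet_Ioi fun s hs => ?_
        have hs : 0 < s := hs
        by_cases hsx : s < x⁻¹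
        · rw [indicator_of_mem (show s ∈ Ioo 0 x⁻¹ from ⟨hs, hsx⟩)]
          have hexp : exp (-(l * x * s)) ≤ 1 := exp_le_one_iff.mpr (neg_nonpos.mpr (by positivity))
          have hlarge_nonneg : 0 ≤ exp (1 - l) * (s ^ 2 * exp (-(x * s))) := by positivity
          linarith [mul_le_of_le_one_right (sq_nonneg s) hexp]
        · rw [indicator_of_notMem fun h => hsx h.2, zero_add, mul_left_comm, mul_assoc]
          have hxs : 1 ≤ x * s := by rwa [not_lt, inv_le_iff_one_le_mul₀' hx] at hsx
          gcongr
          exact exp_neg_mul_le_exp_one_sub_mul hl hxs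
    _ = (∫ s in Ioo 0 x⁻¹, s ^ 2 ∂ν) + exp (1 - l) * ∫ s in Ioi 0, s ^ 2 * exp (-(x * s)) ∂ν := by
        rw [integral_add hsmall hlarge, setIntegral_indicator measurableSet_Ioo,
          Ioi_inter_Ioo, max_self, integral_const_mul]

end LevyMeasure

lemma integrableOn_min_one_sq_of_lintegral_ne_top {ν : Measure ℝ}
    (hint : ∫⁻ x in Ioi (0:ℝ), ENNReal.ofReal (min 1 (x ^ 2)) ∂ν ≠ ⊤) :
    IntegrableOn (fun s => min 1 (s ^ 2)) (Ioi 0) ν := by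
  have := integrable_toReal_of_lintegral_ne_top (by fun_prop) hint
  simpa only [IntegrableOn, ENNReal.toReal_ofReal (le_min zero_le_one (sq_nonneg _))] using this

theorem statement6_general
    (ν : Measure ℝ)
    (hint : ∫⁻ x in Ioi (0:ℝ), ENNReal.ofReal (min 1 (x ^ 2)) ∂ν ≠ ⊤)
    (σ : ℝ)
    (φ'' : ℝ → ℝ)
    (hφ'' : ∀ l : ℝ, 0 < l → φ'' l = 2 * σ ^ 2 + ∫ x in Ioi (0:ℝ), x ^ 2 * Real.exp (-(l * x)) ∂ν)
    (α c x₀ : ℝ) (hc : c ∈ Ioc (0:ℝ) 1) (hx₀ : 0 ≤ x₀)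
    (hscal : WLSC φ'' (α - 2) c x₀) :
    ∃ C : ℝ, 0 < C ∧ ∀ x : ℝ, x₀ < x →
      C * φ'' x ≤ σ ^ 2 + ∫ s in Ioo (0:ℝ) x⁻¹, s ^ 2 ∂ν := by
  have hν := integrableOn_min_one_sq_of_lintegral_ne_top hint
  obtain ⟨l, hl, hexp⟩ := exists_exp_one_sub_le_mul_rpow (half_pos hc.1) (α - 2)
  refine ⟨c / 4 * l ^ (α - 2), by have := hc.1; positivity, fun x hx => ?_⟩
  have hx0 : 0 < x := hx₀.trans_lt hx
  have hφ''_nonneg : 0 ≤ φ'' x := by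
    rw [hφ'' x hx0]
    exact add_nonneg (by positivity) (setIntegral_nonneg measurableSet_Ioi fun s _ => by positivity)
  have hsmall_nonneg : 0 ≤ ∫ s in Ioo (0:ℝ) x⁻¹, s ^ 2 ∂ν :=
    setIntegral_nonneg measurableSet_Ioo fun s _ => sq_nonneg s
  have hupper : φ'' (l * x) ≤ 2 * σ ^ 2 + (∫ s in Ioo (0:ℝ) x⁻¹, s ^ 2 ∂ν) + exp (1 - l) * φ'' x := by
    rw [hφ'' (l * x) (by positivity), hφ'' x hx0]
    linarith [integral_sq_mul_exp_neg_mul_mul_le hν hx0 hl, mul_nonneg (exp_pos (1 - l)).le (sq_nonneg σ)]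
  have habsorb := mul_le_mul_of_nonneg_right hexp hφ''_nonneg
  linarith [hscal l hl x hx, sq_nonneg σ]

/-- Lemma 2. -/
theorem statement6
    (ν : Measure ℝ) [SigmaFinite ν]
    (hint : ∫⁻ x in Ioi (0:ℝ), ENNReal.ofReal (min 1 (x ^ 2)) ∂ν ≠ ⊤)
    (σ b : ℝ) (hσ : 0 ≤ σ)
    (φ φ' φ'' : ℝ → ℝ)
    (hφ : ∀ l : ℝ, 0 ≤ l → φ l = σ ^ 2 * l ^ 2 - b * l +
      ∫ x in Ioi (0:ℝ), (Real.exp (-(l * x)) - 1 + l * x * (if x < 1 then 1 else 0)) ∂ν)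
    (hD1 : ∀ x : ℝ, 0 < x → HasDerivAt φ (φ' x) x)
    (hD2 : ∀ x : ℝ, 0 < x → HasDerivAt φ' (φ'' x) x)
    (hφ'' : ∀ l : ℝ, 0 < l → φ'' l = 2 * σ ^ 2 + ∫ x in Ioi (0:ℝ), x ^ 2 * Real.exp (-(l * x)) ∂ν)
    (α c x₀ : ℝ) (hα : 0 < α) (hc : c ∈ Ioc (0:ℝ) 1) (hx₀ : 0 ≤ x₀)
    (hscal : WLSC φ'' (α - 2) c x₀) :
    ∃ C : ℝ, 0 < C ∧ ∀ x : ℝ, x₀ < x →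
      C * φ'' x ≤ σ ^ 2 + ∫ s in Ioo (0:ℝ) x⁻¹, s ^ 2 ∂ν :=
  statement6_general ν hint σ φ'' hφ'' α c x₀ hc hx₀ hscal

end
end
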